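/- Let (q_k)_{k≥1} and α_{k,i} be as in the four-species coefficient setup. Then α_{k,1} = 1/2 for all k ≥ 2, α_{k,2} = 1/2 for all k ≥ 3, and α_{k,3} = −1/3 for all k ≥ 4; that is, the stabilized coefficients satisfy β₁ = 1/2, β₂ = 1/2, β₃ = −1/3. -/
import Mathlib
open Polynomial

namespace BS4

noncomputable def pintL (F : Type*) [Field F] : Polynomial F →ₗ[F] Polynomial F where
  toFun p := p.sum fun n a => C (a / (n+1)) * X^(n+1)
  map_add' p q := Polynomial.sum_add_index p q _ (by simp)
    (by intro a b₁ b₂; rw [add_div, C_add, add_mul])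
  map_smul' c p := by
    rw [RingHom.id_apply, Polynomial.sum_smul_index _ _ _ (by simp), Polynomial.smul_sum]
    exact Finset.sum_congr rfl (fun n hn => by dsimp only; rw [smul_eq_C_mul, mul_div_assoc, C_mul, mul_assoc])

variable {F : Type*} [Field F]

noncomputable abbrev pint (p : Polynomial F) : Polynomial F := pintL F p

lemma pint_def (p : Polynomial F) :
    pint p = p.sum fun n a => C (a / (n+1)) * X^(n+1) := rfl

lemma pint_add (p q : Polynomial F) : pint (p + q) = pint p + pint q := map_add _ _ _
lemma pint_sub (p q : Polynomial F) : pint (p - q) = pint p - pint q := map_sub _ _ _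

lemma pint_monomial (n : ℕ) (a : F) :
    pint (monomial n a) = monomial (n+1) (a / (n+1)) := by
  rw [pint_def, Polynomial.sum_monomial_index _ _ (by simp), C_mul_X_pow_eq_monomial]

lemma derivative_pint [CharZero F] (p : Polynomial F) : derivative (pint p) = p := by
  induction p using Polynomial.induction_on' with
  | add p q hp hq => rw [pint_add, map_add, hp, hq]
  | monomial n a =>
      rw [pint_monomial, derivative_monomial]
      rw [Nat.add_sub_cancel]
      have h : ((n:F)+1) ≠ 0 := Nat.cast_add_one_ne_zero n
      push_cast
      rw [div_mul_cancel₀ _ h]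

lemma coeff_pint_zero (p : Polynomial F) : (pint p).coeff 0 = 0 := by
  induction p using Polynomial.induction_on' with
  | add p q hp hq => rw [pint_add, coeff_add, hp, hq, add_zero]
  | monomial n a => rw [pint_monomial, coeff_monomial]; simp

lemma coeff_pint_succ [CharZero F] (p : Polynomial F) (n : ℕ) :
    (pint p).coeff (n+1) = p.coeff n / (n+1) := by
  induction p using Polynomial.induction_on' with
  | add p q hp hq => rw [pint_add, coeff_add, hp, hq, coeff_add, add_div]
  | monomial m a =>
      rw [pint_monomial, coeff_monomial, coeff_monomial]
      by_cases h : m = n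
      · subst h; simp
      · rw [if_neg (by omega), if_neg h, zero_div]

lemma eval_zero_pint (p : Polynomial F) : eval 0 (pint p) = 0 := by
  rw [← Polynomial.coeff_zero_eq_eval_zero, coeff_pint_zero]

lemma map_pint {K : Type*} [Field K] (f : F →+* K) (p : Polynomial F) :
    map f (pint p) = pint (map f p) := by
  induction p using Polynomial.induction_on' with
  | add p q hp hq => rw [pint_add, Polynomial.map_add, hp, hq, Polynomial.map_add, pint_add]
  | monomial n a =>
      rw [pint_monomial, map_monomial, map_monomial, pint_monomial, map_div₀]
      simp


lemma coeff_mul_exp (p q : Polynomial F) (k : ℕ) :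
    (p*q).coeff k = ∑ i ∈ Finset.range (k+1), p.coeff i * q.coeff (k-i) := by
  rw [coeff_mul, Finset.Nat.sum_antidiagonal_eq_sum_range_succ_mk]

noncomputable def eP : Polynomial F := X - C (1/2 : F) * X^2

@[simp] lemma eP_coeff_0 : (eP : Polynomial F).coeff 0 = 0 := by simp [eP]
@[simp] lemma eP_coeff_1 : (eP : Polynomial F).coeff 1 = 1 := by simp [eP]
@[simp] lemma eP_coeff_2 : (eP : Polynomial F).coeff 2 = -(1/2) := by
  simp [eP, coeff_X]
@[simp] lemma eP_coeff_3 : (eP : Polynomial F).coeff 3 = 0 := by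
  simp [eP, coeff_X]

noncomputable def TT (p : Polynomial F) : Polynomial F :=
  p * (pint eP + (1 - X) * eP)
  + pint (p * eP + pint ((1 - X) * p) + C (eval 1 (pint p)) * X - pint (pint p))
  + eP * (C (eval 1 (pint p)) - pint p)
  + (1 - X) * (pint ((1 - X) * p) + C (eval 1 (pint p)) * X - pint (pint p))

variable [CharZero F]

lemma TT_coeff_0 (p : Polynomial F) : (TT p).coeff 0 = 0 := by
  simp [TT, coeff_mul_exp, Finset.sum_range_succ, coeff_pint_zero]

lemma TT_coeff_1 (p : Polynomial F) :
    (TT p).coeff 1 = 2 * p.coeff 0 + 2 * eval 1 (pint p) := by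
  simp [TT, coeff_mul_exp, Finset.sum_range_succ, coeff_pint_zero, coeff_pint_succ, coeff_one, coeff_X]
  ring

lemma TT_coeff_2 (p : Polynomial F) :
    (TT p).coeff 2 = 3/2 * p.coeff 1 - 3 * p.coeff 0 - eval 1 (pint p) := by
  simp [TT, coeff_mul_exp, Finset.sum_range_succ, coeff_pint_zero, coeff_pint_succ, coeff_one, coeff_X]
  ring

lemma TT_coeff_3 (p : Polynomial F) :
    (TT p).coeff 3 = 4/3 * p.coeff 2 - 2 * p.coeff 1 + 4/3 * p.coeff 0 := by
  simp [TT, coeff_mul_exp, Finset.sum_range_succ, coeff_pint_zero, coeff_pint_succ, coeff_one, coeff_X]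
  ring


noncomputable def jL (F : Type*) [Field F] : Polynomial F →ₗ[F] F :=
  (Polynomial.leval 1).comp (pintL F)

noncomputable def TTL (F : Type*) [Field F] : Polynomial F →ₗ[F] Polynomial F :=
  LinearMap.mulRight F (pint eP + (1 - X) * eP)
  + (pintL F).comp (LinearMap.mulRight F eP + (pintL F).comp (LinearMap.mulLeft F (1 - X))
      + (jL F).smulRight X - (pintL F).comp (pintL F))
  + ((jL F).smulRight eP - (LinearMap.mulLeft F eP).comp (pintL F))
  + (LinearMap.mulLeft F (1 - X)).comp
      ((pintL F).comp (LinearMap.mulLeft F (1 - X)) + (jL F).smulRight X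
        - (pintL F).comp (pintL F))

lemma TT_eq_TTL (p : Polynomial F) : TT p = TTL F p := by
  simp only [TTL, TT, jL, LinearMap.add_apply, LinearMap.sub_apply, LinearMap.comp_apply,
    LinearMap.mulRight_apply, LinearMap.mulLeft_apply, LinearMap.smulRight_apply,
    Polynomial.leval_apply, smul_eq_C_mul]
  ring_nf

lemma TT_add (p q : Polynomial F) : TT (p + q) = TT p + TT q := by
  rw [TT_eq_TTL, TT_eq_TTL, TT_eq_TTL, map_add]

lemma eP_eq : (eP : Polynomial F) = monomial 1 1 - monomial 2 (1/2) := by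
  rw [eP, C_mul_X_pow_eq_monomial, ← monomial_one_one_eq_X]

set_option maxRecDepth 10000 in
set_option maxHeartbeats 2000000 in
lemma TT_inv (p : Polynomial ℚ) : eval 1 (pint (TT p)) = eval 1 (pint p) := by
  induction p using Polynomial.induction_on' with
  | add p q hp hq => rw [TT_add, pint_add, eval_add, hp, hq, pint_add, eval_add]
  | monomial n a =>
      have h1 : ((n:ℚ)+1) ≠ 0 := Nat.cast_add_one_ne_zero n
      have h2 : ((n:ℚ)+2) ≠ 0 := fun h =>
        (Nat.cast_add_one_ne_zero (R:=ℚ) (n+1)) (by push_cast; linear_combination h)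
      have h3 : ((n:ℚ)+3) ≠ 0 := fun h =>
        (Nat.cast_add_one_ne_zero (R:=ℚ) (n+2)) (by push_cast; linear_combination h)
      have h4 : ((n:ℚ)+4) ≠ 0 := fun h =>
        (Nat.cast_add_one_ne_zero (R:=ℚ) (n+3)) (by push_cast; linear_combination h)
      have h5 : ((n:ℚ)+5) ≠ 0 := fun h =>
        (Nat.cast_add_one_ne_zero (R:=ℚ) (n+4)) (by push_cast; linear_combination h)
      have hs1 : (1 - X) * (monomial n a : Polynomial ℚ)
          = monomial n a - monomial (1+n) (1*a) := by
        rw [sub_mul, one_mul, ← monomial_one_one_eq_X, monomial_mul_monomial]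
      have hpe : (monomial n a : Polynomial ℚ) * eP
          = monomial (n+1) (a*1) - monomial (n+2) (a*(1/2)) := by
        rw [eP_eq, mul_sub, monomial_mul_monomial, monomial_mul_monomial]
      simp only [TT, eP_eq, hs1, hpe, ← monomial_zero_one, ← monomial_one_one_eq_X,
        ← monomial_zero_left, mul_add, add_mul, mul_sub, sub_mul, monomial_mul_monomial,
        pint_add, pint_sub, pint_monomial, eval_add, eval_sub, eval_monomial, one_pow,
        mul_one, one_mul]
      push_cast
      field_simp
      ring

open MeasureTheory intervalIntegral in
lemma ftc (r : Polynomial ℝ) (a b : ℝ) :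
    ∫ t in a..b, eval t r = eval b (pint r) - eval a (pint r) := by
  apply intervalIntegral.integral_eq_sub_of_hasDerivAt
  · intro t ht
    simpa [derivative_pint] using Polynomial.hasDerivAt (pint r) t
  · exact (Polynomial.continuous r).intervalIntegrable a b

open MeasureTheory in
lemma intInt_ind {g : ℝ → ℝ} (hg : Continuous g) (c a b : ℝ) :
    IntervalIntegrable ({t : ℝ | t ≤ c}.indicator g) volume a b := by
  constructor
  · exact ((hg.intervalIntegrable a b).1).indicator measurableSet_Iic
  · exact ((hg.intervalIntegrable a b).2).indicator measurableSet_Iic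

open MeasureTheory in
lemma ae_ne_vol (c : ℝ) : ∀ᵐ (t : ℝ), t ≠ c := by
  rw [MeasureTheory.ae_iff]
  simpa using Real.volume_singleton

open MeasureTheory in
lemma cut_left {g : ℝ → ℝ} (hg : Continuous g) {c : ℝ} (hc : c ∈ Set.Icc (0:ℝ) 1) :
    (∫ t in (0:ℝ)..1, if t < c then g t else 0) = ∫ t in (0:ℝ)..c, g t := by
  rw [← intervalIntegral.integral_indicator hc]
  apply intervalIntegral.integral_congr_ae
  filter_upwards [ae_ne_vol c] with t ht _
  by_cases h : t < c
  · rw [if_pos h, Set.indicator_of_mem (show t ∈ {x : ℝ | x ≤ c} from le_of_lt h)]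
  · rw [if_neg h, Set.indicator_of_notMem (show t ∉ {x : ℝ | x ≤ c} by simp only [Set.mem_setOf_eq]; exact fun hle => h (lt_of_le_of_ne hle ht))]

open MeasureTheory in
lemma cut_right {g : ℝ → ℝ} (hg : Continuous g) {c : ℝ} (hc : c ∈ Set.Icc (0:ℝ) 1) :
    (∫ t in (0:ℝ)..1, if c < t then g t else 0) = ∫ t in c..1, g t := by
  have hfun : (fun t => if c < t then g t else 0)
      = fun t => g t - {t : ℝ | t ≤ c}.indicator g t := by
    funext t
    by_cases h : c < t
    · rw [if_pos h, Set.indicator_of_notMem (show t ∉ {x : ℝ | x ≤ c} by simpa using h) g, sub_zero]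
    · rw [if_neg h, Set.indicator_of_mem (show t ∈ {x : ℝ | x ≤ c} from not_lt.mp h) g, sub_self]
  rw [hfun, intervalIntegral.integral_sub (hg.intervalIntegrable _ _) (intInt_ind hg c 0 1),
    intervalIntegral.integral_indicator hc,
    intervalIntegral.integral_interval_sub_left (hg.intervalIntegrable 0 1)
      (hg.intervalIntegrable 0 c)]

lemma pint_C (c : F) : pint (C c) = C c * X := by
  rw [C_mul_X_eq_monomial, ← monomial_zero_left, pint_monomial]
  norm_num

lemma pint_C_mul (c : F) (r : Polynomial F) : pint (C c * r) = C c * pint r := by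
  rw [← smul_eq_C_mul, ← smul_eq_C_mul]
  exact map_smul (pintL F) c r

lemma pint_one_sub_X : pint ((1 : Polynomial F) - X) = eP := by
  rw [pint_sub, ← monomial_zero_one, ← monomial_one_one_eq_X, pint_monomial, pint_monomial,
    eP_eq]
  norm_num [monomial_one_one_eq_X]

open MeasureTheory in
set_option maxHeartbeats 1000000 in
lemma key (r : Polynomial ℝ) {x : ℝ} (hx : x ∈ Set.Icc (0:ℝ) 1) :
    (∫ ξ₁ in (0:ℝ)..1, ∫ ξ₂ in (0:ℝ)..1, ∫ ξ₃ in (0:ℝ)..1,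
      if ξ₂ < min ξ₁ (min ξ₃ x) then
        eval x r + eval ξ₁ r + eval ξ₂ r + eval ξ₃ r
      else 0) = eval x (TT r) := by
  obtain ⟨hx0, hx1⟩ := hx
  set A := eval x r with hA
  -- Step 1 : innermost integral
  have claim1 : ∀ ξ₁ ξ₂ : ℝ, 0 ≤ ξ₂ → ξ₂ ≤ 1 →
      (∫ ξ₃ in (0:ℝ)..1, if ξ₂ < min ξ₁ (min ξ₃ x) then
          A + eval ξ₁ r + eval ξ₂ r + eval ξ₃ r else 0)
      = (if ξ₂ < min ξ₁ x then
          eval ξ₂ ((1 - X) * (C (A + eval ξ₁ r) + r) + C (eval 1 (pint r)) - pint r) else 0) := by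
    intro ξ₁ ξ₂ h0 h1
    by_cases hm : ξ₂ < min ξ₁ x
    · rw [if_pos hm]
      obtain ⟨hm1, hmx⟩ := lt_min_iff.mp hm
      have hcong : (fun ξ₃ : ℝ => if ξ₂ < min ξ₁ (min ξ₃ x) then
            A + eval ξ₁ r + eval ξ₂ r + eval ξ₃ r else 0)
          = fun ξ₃ : ℝ => if ξ₂ < ξ₃ then eval ξ₃ (C (A + eval ξ₁ r + eval ξ₂ r) + r) else 0 := by
        funext ξ₃
        simp only [lt_min_iff, hm1, hmx, true_and, and_true, eval_add, eval_C]
      rw [hcong, cut_right (Polynomial.continuous _) ⟨h0, h1⟩, ftc, pint_add, pint_C]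
      simp only [eval_add, eval_sub, eval_mul, eval_one, eval_C, eval_X, eval_pow]
      ring
    · rw [if_neg hm]
      have hzero : (fun ξ₃ : ℝ => if ξ₂ < min ξ₁ (min ξ₃ x) then
            A + eval ξ₁ r + eval ξ₂ r + eval ξ₃ r else 0) = fun _ => (0:ℝ) := by
        funext ξ₃
        rw [if_neg]
        intro h
        rw [lt_min_iff] at h hm
        exact hm ⟨h.1, (lt_min_iff.mp h.2).2⟩
      rw [hzero]
      simp
  -- Step 2 : middle integral
  have claim2 : ∀ ξ₁ : ℝ, 0 ≤ ξ₁ → ξ₁ ≤ 1 →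
      (∫ ξ₂ in (0:ℝ)..1, if ξ₂ < min ξ₁ x then
          eval ξ₂ ((1 - X) * (C (A + eval ξ₁ r) + r) + C (eval 1 (pint r)) - pint r) else 0)
      = (A + eval ξ₁ r) * eval (min ξ₁ x) eP + eval (min ξ₁ x) (pint ((1 - X) * r))
          + eval 1 (pint r) * (min ξ₁ x) - eval (min ξ₁ x) (pint (pint r)) := by
    intro ξ₁ h0 h1
    have hmem : min ξ₁ x ∈ Set.Icc (0:ℝ) 1 := ⟨le_min h0 hx0, min_le_of_left_le h1⟩
    rw [cut_left (Polynomial.continuous _) hmem, ftc, eval_zero_pint, sub_zero]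
    have hexp : ((1 - X) * (C (A + eval ξ₁ r) + r) + C (eval 1 (pint r)) - pint r : Polynomial ℝ)
        = C (A + eval ξ₁ r) * (1 - X) + (1 - X) * r + C (eval 1 (pint r)) - pint r := by ring
    rw [hexp, pint_sub, pint_add, pint_add, pint_C_mul, pint_one_sub_X, pint_C]
    simp only [eval_add, eval_sub, eval_mul, eval_C, eval_X]
    all_goals ring
  -- combine the two inner integrals
  have hout : ∀ ξ₁ : ℝ, 0 ≤ ξ₁ → ξ₁ ≤ 1 →
      (∫ ξ₂ in (0:ℝ)..1, ∫ ξ₃ in (0:ℝ)..1, if ξ₂ < min ξ₁ (min ξ₃ x) then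
          A + eval ξ₁ r + eval ξ₂ r + eval ξ₃ r else 0)
      = (A + eval ξ₁ r) * eval (min ξ₁ x) eP + eval (min ξ₁ x) (pint ((1 - X) * r))
          + eval 1 (pint r) * (min ξ₁ x) - eval (min ξ₁ x) (pint (pint r)) := by
    intro ξ₁ h0 h1
    rw [intervalIntegral.integral_congr (g := fun ξ₂ : ℝ => if ξ₂ < min ξ₁ x then
        eval ξ₂ ((1 - X) * (C (A + eval ξ₁ r) + r) + C (eval 1 (pint r)) - pint r) else 0)
      (fun ξ₂ hξ₂ => by
        rw [Set.uIcc_of_le (by norm_num : (0:ℝ) ≤ 1)] at hξ₂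
        exact claim1 ξ₁ ξ₂ hξ₂.1 hξ₂.2)]
    exact claim2 ξ₁ h0 h1
  -- outer integral
  have hM : Continuous (fun ξ₁ : ℝ => (A + eval ξ₁ r) * eval (min ξ₁ x) eP
      + eval (min ξ₁ x) (pint ((1 - X) * r))
      + eval 1 (pint r) * (min ξ₁ x) - eval (min ξ₁ x) (pint (pint r))) := by
    have hmin : Continuous (fun ξ₁ : ℝ => min ξ₁ x) := continuous_id.min continuous_const
    exact ((((continuous_const.add (Polynomial.continuous r)).mul
        ((Polynomial.continuous eP).comp hmin)).add
        ((Polynomial.continuous (pint ((1 - X) * r))).comp hmin)).add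
        (continuous_const.mul hmin)).sub ((Polynomial.continuous (pint (pint r))).comp hmin)
  rw [intervalIntegral.integral_congr (g := fun ξ₁ : ℝ => (A + eval ξ₁ r) * eval (min ξ₁ x) eP
      + eval (min ξ₁ x) (pint ((1 - X) * r))
      + eval 1 (pint r) * (min ξ₁ x) - eval (min ξ₁ x) (pint (pint r)))
    (fun ξ₁ hξ₁ => by
      rw [Set.uIcc_of_le (by norm_num : (0:ℝ) ≤ 1)] at hξ₁
      exact hout ξ₁ hξ₁.1 hξ₁.2)]
  rw [← intervalIntegral.integral_add_adjacent_intervals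
    (hM.intervalIntegrable 0 x) (hM.intervalIntegrable x 1)]
  -- the [0,x] part
  have hleft : (∫ ξ₁ in (0:ℝ)..x, ((A + eval ξ₁ r) * eval (min ξ₁ x) eP
      + eval (min ξ₁ x) (pint ((1 - X) * r))
      + eval 1 (pint r) * (min ξ₁ x) - eval (min ξ₁ x) (pint (pint r))))
      = eval x (pint ((C A + r) * eP + pint ((1 - X) * r)
          + C (eval 1 (pint r)) * X - pint (pint r))) := by
    rw [intervalIntegral.integral_congr (g := fun ξ₁ : ℝ =>
        eval ξ₁ ((C A + r) * eP + pint ((1 - X) * r)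
          + C (eval 1 (pint r)) * X - pint (pint r)))
      (fun ξ₁ hξ₁ => by
        rw [Set.uIcc_of_le hx0] at hξ₁
        rw [min_eq_left hξ₁.2]
        simp only [eval_add, eval_sub, eval_mul, eval_C, eval_X]
        all_goals ring)]
    rw [ftc, eval_zero_pint, sub_zero]
  -- the [x,1] part
  have hright : (∫ ξ₁ in x..(1:ℝ), ((A + eval ξ₁ r) * eval (min ξ₁ x) eP
      + eval (min ξ₁ x) (pint ((1 - X) * r))
      + eval 1 (pint r) * (min ξ₁ x) - eval (min ξ₁ x) (pint (pint r))))
      = (eval 1 (pint (C (eval x eP) * r)) + (1 - x) * (A * eval x eP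
          + eval x (pint ((1 - X) * r)) + eval 1 (pint r) * x - eval x (pint (pint r))))
        - eval x (pint (C (eval x eP) * r)) := by
    rw [intervalIntegral.integral_congr (g := fun ξ₁ : ℝ =>
        eval ξ₁ (C (eval x eP) * r + C (A * eval x eP + eval x (pint ((1 - X) * r))
          + eval 1 (pint r) * x - eval x (pint (pint r)))))
      (fun ξ₁ hξ₁ => by
        rw [Set.uIcc_of_le hx1] at hξ₁
        rw [min_eq_right hξ₁.1]
        simp only [eval_add, eval_sub, eval_mul, eval_C, eval_X]
        ring)]
    rw [ftc, pint_add, pint_C]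
    simp only [eval_add, eval_sub, eval_mul, eval_C, eval_X, eval_one]
    ring
  rw [hleft, hright]
  -- final algebraic identification
  have hsplit : ((C A + r) * eP + pint ((1 - X) * r)
      + C (eval 1 (pint r)) * X - pint (pint r) : Polynomial ℝ)
      = C A * eP + (r * eP + pint ((1 - X) * r)
        + C (eval 1 (pint r)) * X - pint (pint r)) := by ring
  rw [hsplit, pint_add, pint_C_mul, pint_C_mul]
  simp only [TT, eval_add, eval_sub, eval_mul, eval_C, eval_X, eval_one]
  ring

lemma TT_map {K : Type*} [Field K] (f : F →+* K) (p : Polynomial F) :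
    map f (TT p) = TT (map f p) := by
  have heP : map f (eP : Polynomial F) = eP := by
    simp [eP, Polynomial.map_sub, Polynomial.map_mul, Polynomial.map_pow, map_C, map_X,
      map_div₀, map_one, map_ofNat]
  have h1 : eval 1 (pint (map f p)) = f (eval 1 (pint p)) := by rw [← map_pint, eval_one_map]
  simp only [TT, Polynomial.map_add, Polynomial.map_sub, Polynomial.map_mul,
    Polynomial.map_one, map_pint, map_C, map_X, heP, h1]

lemma step_eq (q : ℕ → Polynomial ℚ)
    (hrec : ∀ k, 1 ≤ k → ∀ x ∈ Set.Icc (0 : ℝ) 1,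
      (Polynomial.aeval x) (q (k + 1)) =
        ∫ ξ₁ in (0:ℝ)..1, ∫ ξ₂ in (0:ℝ)..1, ∫ ξ₃ in (0:ℝ)..1,
          if ξ₂ < min ξ₁ (min ξ₃ x) then
            (Polynomial.aeval x) (q k) + (Polynomial.aeval ξ₁) (q k)
              + (Polynomial.aeval ξ₂) (q k) + (Polynomial.aeval ξ₃) (q k)
          else 0) :
    ∀ k, 1 ≤ k → q (k + 1) = TT (q k) := by
  intro k hk
  set f := algebraMap ℚ ℝ
  have hagree : ∀ x ∈ Set.Icc (0:ℝ) 1,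
      eval x (map f (q (k+1))) = eval x (TT (map f (q k))) := by
    intro x hx
    have h1 := hrec k hk x hx
    simp only [aeval_def, eval₂_eq_eval_map] at h1
    rw [h1, key (map f (q k)) hx]
  have hroots : {x : ℝ | (map f (q (k+1)) - TT (map f (q k))).IsRoot x}.Infinite := by
    apply Set.Infinite.mono (s := Set.Icc (0:ℝ) 1)
    · intro x hx
      simp only [Set.mem_setOf_eq, IsRoot, eval_sub, sub_eq_zero]
      exact hagree x hx
    · exact Set.Icc_infinite (by norm_num)
  have hzero := Polynomial.eq_zero_of_infinite_isRoot _ hroots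
  have hmeq : map f (q (k+1)) = map f (TT (q k)) := by
    rw [TT_map]
    exact sub_eq_zero.mp hzero
  exact Polynomial.map_injective f (algebraMap ℚ ℝ).injective hmeq

lemma q1_coeff0 : (X - X ^ 2 + C (1/3 : ℚ) * X ^ 3).coeff 0 = 0 := by
  simp

lemma q1_J : eval 1 (pint (X - X ^ 2 + C (1/3 : ℚ) * X ^ 3)) = 1/4 := by
  have h : (X - X ^ 2 + C (1/3 : ℚ) * X ^ 3)
      = monomial 1 1 - monomial 2 1 + monomial 3 (1/3 : ℚ) := by
    rw [← C_mul_X_pow_eq_monomial, ← C_mul_X_pow_eq_monomial, ← C_mul_X_pow_eq_monomial]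
    simp [pow_one]
  rw [h, pint_add, pint_sub, pint_monomial, pint_monomial, pint_monomial]
  simp only [eval_add, eval_sub, eval_monomial, one_pow, mul_one]
  norm_num

end BS4

open BS4 in
/-- In the four-species coefficient setup, $\alpha_{k,1} = 1/2$ for $k \ge 2$,
$\alpha_{k,2} = 1/2$ for $k \ge 3$, and $\alpha_{k,3} = -1/3$ for $k \ge 4$;
i.e. the stabilized coefficients are $\beta_1 = 1/2$, $\beta_2 = 1/2$, $\beta_3 = -1/3$. -/
theorem bs4_first_stabilized_coefficients
    (q : ℕ → Polynomial ℚ)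
    (hq1 : q 1 = X - X ^ 2 + C (1/3 : ℚ) * X ^ 3)
    (hrec : ∀ k, 1 ≤ k → ∀ x ∈ Set.Icc (0 : ℝ) 1,
      (Polynomial.aeval x) (q (k + 1)) =
        ∫ ξ₁ in (0:ℝ)..1, ∫ ξ₂ in (0:ℝ)..1, ∫ ξ₃ in (0:ℝ)..1,
          if ξ₂ < min ξ₁ (min ξ₃ x) then
            (Polynomial.aeval x) (q k) + (Polynomial.aeval ξ₁) (q k)
              + (Polynomial.aeval ξ₂) (q k) + (Polynomial.aeval ξ₃) (q k)
          else 0) :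
    (∀ k, 2 ≤ k → (q k).coeff 1 = 1 / 2)
    ∧ (∀ k, 3 ≤ k → (q k).coeff 2 = 1 / 2)
    ∧ (∀ k, 4 ≤ k → (q k).coeff 3 = -(1 / 3)) := by
  have hstep := step_eq q hrec
  have h0 : ∀ k, 1 ≤ k → (q k).coeff 0 = 0 := by
    intro k hk
    refine Nat.le_induction ?_ ?_ k hk
    · rw [hq1]; exact q1_coeff0
    · intro n hn _; rw [hstep n hn, TT_coeff_0]
  have hJ : ∀ k, 1 ≤ k → eval 1 (pint (q k)) = 1/4 := by
    intro k hk
    refine Nat.le_induction ?_ ?_ k hk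
    · rw [hq1]; exact q1_J
    · intro n hn ih; rw [hstep n hn, TT_inv, ih]
  have hc1 : ∀ k, 2 ≤ k → (q k).coeff 1 = 1 / 2 := by
    intro k hk
    obtain ⟨n, rfl⟩ : ∃ n, k = n + 1 := ⟨k - 1, by omega⟩
    have hn : 1 ≤ n := by omega
    rw [hstep n hn, TT_coeff_1, h0 n hn, hJ n hn]
    norm_num
  have hc2 : ∀ k, 3 ≤ k → (q k).coeff 2 = 1 / 2 := by
    intro k hk
    obtain ⟨n, rfl⟩ : ∃ n, k = n + 1 := ⟨k - 1, by omega⟩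
    have hn : 1 ≤ n := by omega
    rw [hstep n hn, TT_coeff_2, h0 n hn, hJ n hn, hc1 n (by omega)]
    norm_num
  have hc3 : ∀ k, 4 ≤ k → (q k).coeff 3 = -(1 / 3) := by
    intro k hk
    obtain ⟨n, rfl⟩ : ∃ n, k = n + 1 := ⟨k - 1, by omega⟩
    have hn : 1 ≤ n := by omega
    rw [hstep n hn, TT_coeff_3, h0 n hn, hc1 n (by omega), hc2 n (by omega)]
    norm_num
  exact ⟨hc1, hc2, hc3⟩
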